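/- arXiv:2105.08135 — 3 statements merged into one kernel-verified Lean document; each statement's English description precedes it below -/
import Mathlib

section
/- Let e be a unit vector in ℝ^d, let v₁, …, v_J be unit vectors lying in the open half-space {x : ⟨x, e⟩ > 0}, and let m₁, …, m_J be positive real numbers. Define z := (∑ⱼ mⱼ vⱼ) / (∑ⱼ mⱼ). Then z ≠ 0 and ∑ⱼ mⱼ |vⱼ − z| < ∑ⱼ mⱼ. -/
open scoped BigOperators InnerProductSpace

/-- Weighted barycenter estimate: if unit vectors `v j` lie in the open half-space
`{x : ⟪x, e⟫ > 0}` determined by a unit vector `e`, and `m j > 0`, then the weighted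
barycenter `z = (∑ m j • v j) / (∑ m j)` is nonzero and `∑ m j * ‖v j - z‖ < ∑ m j`. -/
theorem stmt_1 {d J : ℕ} (hJ : 0 < J)
    (e : EuclideanSpace ℝ (Fin d)) (he : ‖e‖ = 1)
    (v : Fin J → EuclideanSpace ℝ (Fin d)) (hv : ∀ j, ‖v j‖ = 1)
    (hhalf : ∀ j, 0 < ⟪v j, e⟫_ℝ)
    (m : Fin J → ℝ) (hm : ∀ j, 0 < m j) :
    (∑ j, m j)⁻¹ • (∑ j, m j • v j) ≠ 0 ∧
      ∑ j, m j * ‖v j - (∑ j, m j)⁻¹ • (∑ j, m j • v j)‖ < ∑ j, m j := by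
  set M : ℝ := ∑ j, m j with hMdef
  have hM : 0 < M := Finset.sum_pos (fun j _ => hm j) (Finset.univ_nonempty_iff.2 ⟨⟨0, hJ⟩⟩)
  set z : EuclideanSpace ℝ (Fin d) := M⁻¹ • (∑ j, m j • v j) with hzdef
  have hsum : ∑ j, m j • v j = M • z := by
    rw [hzdef, smul_smul, mul_inv_cancel₀ hM.ne', one_smul]
  have hze : 0 < ⟪z, e⟫_ℝ := by
    rw [hzdef, real_inner_smul_left, sum_inner]
    refine mul_pos (inv_pos.2 hM) (Finset.sum_pos (fun j _ => ?_)
      (Finset.univ_nonempty_iff.2 ⟨⟨0, hJ⟩⟩))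
    rw [real_inner_smul_left]
    exact mul_pos (hm j) (hhalf j)
  have hz0 : z ≠ 0 := by
    intro h
    rw [h, inner_zero_left] at hze
    exact lt_irrefl 0 hze
  have hznorm : 0 < ‖z‖ := norm_pos_iff.2 hz0
  -- key: ∑ m j * ‖v j - z‖ ^ 2 = M - M * ‖z‖ ^ 2
  have hkey : ∑ j, m j * ‖v j - z‖ ^ 2 = M - M * ‖z‖ ^ 2 := by
    have h1 : ∀ j, ‖v j - z‖ ^ 2 = 1 - 2 * ⟪v j, z⟫_ℝ + ‖z‖ ^ 2 := by
      intro j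
      rw [norm_sub_sq_real, hv j]
      ring
    have h2 : ∑ j, m j * ⟪v j, z⟫_ℝ = M * ‖z‖ ^ 2 := by
      have : ⟪∑ j, m j • v j, z⟫_ℝ = ∑ j, m j * ⟪v j, z⟫_ℝ := by
        rw [sum_inner]
        exact Finset.sum_congr rfl fun j _ => real_inner_smul_left _ _ _
      rw [← this, hsum, real_inner_smul_left, real_inner_self_eq_norm_sq]
    calc ∑ j, m j * ‖v j - z‖ ^ 2
        = ∑ j, (m j * 1 - 2 * (m j * ⟪v j, z⟫_ℝ) + m j * ‖z‖ ^ 2) := by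
          refine Finset.sum_congr rfl fun j _ => ?_
          rw [h1 j]; ring
      _ = M - 2 * (M * ‖z‖ ^ 2) + M * ‖z‖ ^ 2 := by
          rw [Finset.sum_add_distrib, Finset.sum_sub_distrib, ← Finset.mul_sum, h2,
            ← Finset.sum_mul, ← Finset.sum_mul]
          simp [hMdef]
      _ = M - M * ‖z‖ ^ 2 := by ring
  refine ⟨hz0, ?_⟩
  set S : ℝ := ∑ j, m j * ‖v j - z‖ with hSdef
  have hS0 : 0 ≤ S :=
    Finset.sum_nonneg fun j _ => mul_nonneg (hm j).le (norm_nonneg _)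
  have hCS : S ^ 2 ≤ M * ∑ j, m j * ‖v j - z‖ ^ 2 := by
    have h := Finset.sum_mul_sq_le_sq_mul_sq Finset.univ
      (fun j => Real.sqrt (m j)) (fun j => Real.sqrt (m j) * ‖v j - z‖)
    have e1 : ∑ j, Real.sqrt (m j) * (Real.sqrt (m j) * ‖v j - z‖) = S := by
      refine Finset.sum_congr rfl fun j _ => ?_
      rw [← mul_assoc, Real.mul_self_sqrt (hm j).le]
    have e2 : ∑ j, Real.sqrt (m j) ^ 2 = M := by
      refine Finset.sum_congr rfl fun j _ => ?_
      rw [Real.sq_sqrt (hm j).le]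
    have e3 : ∑ j, (Real.sqrt (m j) * ‖v j - z‖) ^ 2 = ∑ j, m j * ‖v j - z‖ ^ 2 := by
      refine Finset.sum_congr rfl fun j _ => ?_
      rw [mul_pow, Real.sq_sqrt (hm j).le]
    rw [e1, e2, e3] at h
    exact h
  have hlt : S ^ 2 < M ^ 2 := by
    have : M * ∑ j, m j * ‖v j - z‖ ^ 2 < M ^ 2 := by
      rw [hkey]
      have : M * ‖z‖ ^ 2 > 0 := mul_pos hM (pow_pos hznorm 2)
      nlinarith
    exact lt_of_le_of_lt hCS this
  exact lt_of_pow_lt_pow_left₀ 2 hM.le hlt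
end

section
/- Let T be an m-dimensional linear subspace and V an (m−1)-dimensional linear subspace of ℝ^{m+n}, and let p_T, p_V, p_{V^⊥}, p_{T^⊥} denote the corresponding orthogonal projections. Then the trace of p_{V^⊥} ∘ p_T equals 1 + ‖p_V ∘ p_{T^⊥}‖²_{HS}, where ‖·‖_{HS} is the Hilbert–Schmidt norm. Equivalently, if τ₁, …, τ_m is an orthonormal basis of T, then ∑ᵢ ⟨τᵢ, p_{V^⊥}(τᵢ)⟩ = 1 + ‖p_V ∘ p_{T^⊥}‖²_{HS}. -/
open scoped InnerProductSpace

/-!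
Write `P_K` for the orthogonal projection onto `K`, and fix orthonormal bases `τ` of `T`, `σ` of
`V` and `e` of the ambient space. Both sides of the identity are expressed through the cross term
`∑ᵢ ‖P_V τᵢ‖² = ∑ᵢ ∑ₖ ⟪σₖ, τᵢ⟫² = ∑ₖ ‖P_T σₖ‖²`:
`tr (P_{V^⊥} P_T) = ∑ᵢ (1 - ‖P_V τᵢ‖²) = dim T - ∑ᵢ ‖P_V τᵢ‖²`, while, `P_{T^⊥}` being symmetric,
`‖P_V P_{T^⊥}‖²_HS = ‖P_{T^⊥} P_V‖²_HS = ∑ₖ (1 - ‖P_T σₖ‖²) = dim V - ∑ₖ ‖P_T σₖ‖²`.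
Hence the two sides differ by `dim T - dim V = 1`.
-/

namespace Submodule

variable {E : Type*} [NormedAddCommGroup E] [InnerProductSpace ℝ E]
  {ι κ η : Type*} [Fintype ι] [Fintype κ] [Fintype η]

theorem norm_sq_starProjection_eq_sum (K : Submodule ℝ E) [K.HasOrthogonalProjection]
    (b : OrthonormalBasis ι ℝ K) (x : E) :
    ‖K.starProjection x‖ ^ 2 = ∑ i, ⟪(b i : E), x⟫_ℝ ^ 2 := by
  rw [starProjection_apply, ← coe_norm, ← b.sum_sq_inner_right]
  simp only [inner_orthogonalProjectionOnto_eq_of_mem_left]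

theorem inner_starProjection_self_eq_norm_sq (K : Submodule ℝ E) [K.HasOrthogonalProjection]
    (x : E) : ⟪x, K.starProjection x⟫_ℝ = ‖K.starProjection x‖ ^ 2 := by
  rw [real_inner_comm, ← RCLike.re_to_real (x := ⟪_, _⟫_ℝ), re_inner_starProjection_eq_normSq,
    coe_norm, starProjection_apply]

theorem sum_norm_sq_starProjection_orthogonal (K : Submodule ℝ E) [K.HasOrthogonalProjection]
    {v : ι → E} (hv : ∀ i, ‖v i‖ = 1) :
    ∑ i, ‖Kᗮ.starProjection (v i)‖ ^ 2 = Fintype.card ι - ∑ i, ‖K.starProjection (v i)‖ ^ 2 := by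
  have h_pythagoras (i : ι) : ‖Kᗮ.starProjection (v i)‖ ^ 2 = 1 - ‖K.starProjection (v i)‖ ^ 2 := by
    have := norm_sq_eq_add_norm_sq_starProjection (v i) K
    rw [hv i] at this
    linarith
  simp only [h_pythagoras, Finset.sum_sub_distrib, Finset.sum_const, Finset.card_univ,
    nsmul_eq_mul, mul_one]

theorem sum_norm_sq_starProjection_comm (K L : Submodule ℝ E) [K.HasOrthogonalProjection]
    [L.HasOrthogonalProjection] (b : OrthonormalBasis ι ℝ K) (c : OrthonormalBasis κ ℝ L) :
    ∑ i, ‖L.starProjection (b i)‖ ^ 2 = ∑ k, ‖K.starProjection (c k)‖ ^ 2 := by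
  simp_rw [L.norm_sq_starProjection_eq_sum c, K.norm_sq_starProjection_eq_sum b, real_inner_comm]
  exact Finset.sum_comm

/-- The Hilbert–Schmidt norms of `P_K A` and `A P_K` agree for symmetric `A`. -/
theorem sum_norm_sq_starProjection_apply_eq (e : OrthonormalBasis η ℝ E) (K : Submodule ℝ E)
    [K.HasOrthogonalProjection] (b : OrthonormalBasis κ ℝ K) {A : E →ₗ[ℝ] E}
    (hA : A.IsSymmetric) :
    ∑ j, ‖K.starProjection (A (e j))‖ ^ 2 = ∑ k, ‖A (b k)‖ ^ 2 := by
  simp_rw [K.norm_sq_starProjection_eq_sum b, ← hA _ (e _)]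
  rw [Finset.sum_comm]
  simp_rw [e.sum_sq_inner_left]

theorem sum_inner_starProjection_orthogonal_sub_sum_norm_sq (T V : Submodule ℝ E)
    [T.HasOrthogonalProjection] [V.HasOrthogonalProjection] (τ : OrthonormalBasis ι ℝ T)
    (σ : OrthonormalBasis κ ℝ V) (e : OrthonormalBasis η ℝ E) :
    ∑ i, ⟪(τ i : E), Vᗮ.starProjection (τ i)⟫_ℝ
        - ∑ j, ‖V.starProjection (Tᗮ.starProjection (e j))‖ ^ 2
      = Fintype.card ι - Fintype.card κ := by
  have h_trace : ∑ i, ⟪(τ i : E), Vᗮ.starProjection (τ i)⟫_ℝ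
      = Fintype.card ι - ∑ i, ‖V.starProjection (τ i)‖ ^ 2 := by
    simp only [inner_starProjection_self_eq_norm_sq]
    exact V.sum_norm_sq_starProjection_orthogonal (v := fun i ↦ (τ i : E)) τ.norm_eq_one
  have h_hs : ∑ j, ‖V.starProjection (Tᗮ.starProjection (e j))‖ ^ 2
      = Fintype.card κ - ∑ k, ‖T.starProjection (σ k)‖ ^ 2 := by
    rw [← T.sum_norm_sq_starProjection_orthogonal (v := fun k ↦ (σ k : E)) σ.norm_eq_one]
    exact sum_norm_sq_starProjection_apply_eq e V σ Tᗮ.starProjection_isSymmetric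
  rw [h_trace, h_hs, sum_norm_sq_starProjection_comm T V τ σ]
  ring

end Submodule

theorem stmt_2_general {m n : ℕ} (hm : 1 ≤ m)
    (T V : Submodule ℝ (EuclideanSpace ℝ (Fin (m + n))))
    (hV : Module.finrank ℝ V = m - 1)
    (τ : OrthonormalBasis (Fin m) ℝ T) :
    ∑ i, ⟪(τ i : EuclideanSpace ℝ (Fin (m + n))),
        (τ i : EuclideanSpace ℝ (Fin (m + n)))
          - (V.orthogonalProjectionOnto (τ i : EuclideanSpace ℝ (Fin (m + n))) :
              EuclideanSpace ℝ (Fin (m + n)))⟫_ℝ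
      = 1 + ∑ j, ‖(V.orthogonalProjectionOnto
          (EuclideanSpace.basisFun (Fin (m + n)) ℝ j
            - (T.orthogonalProjectionOnto (EuclideanSpace.basisFun (Fin (m + n)) ℝ j) :
                EuclideanSpace ℝ (Fin (m + n)))) : EuclideanSpace ℝ (Fin (m + n)))‖ ^ 2 := by
  have h := T.sum_inner_starProjection_orthogonal_sub_sum_norm_sq V τ (stdOrthonormalBasis ℝ V)
    (EuclideanSpace.basisFun (Fin (m + n)) ℝ)
  simp only [← Submodule.starProjection_apply, ← Submodule.starProjection_orthogonal_val]
  rw [Fintype.card_fin, Fintype.card_fin, hV, Nat.cast_sub hm, Nat.cast_one] at h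
  linarith

/-- Trace identity: for an `m`-dimensional subspace `T` and an `(m-1)`-dimensional
subspace `V` of `ℝ^{m+n}`, `tr (p_{V^⊥} ∘ p_T) = 1 + ‖p_V ∘ p_{T^⊥}‖²_{HS}`, expressed via an
orthonormal basis `τ` of `T` and the standard orthonormal basis of the ambient space. -/
theorem stmt_2 {m n : ℕ} (hm : 1 ≤ m)
    (T V : Submodule ℝ (EuclideanSpace ℝ (Fin (m + n))))
    (hT : Module.finrank ℝ T = m) (hV : Module.finrank ℝ V = m - 1)
    (τ : OrthonormalBasis (Fin m) ℝ T) :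
    ∑ i, ⟪(τ i : EuclideanSpace ℝ (Fin (m + n))),
        (τ i : EuclideanSpace ℝ (Fin (m + n)))
          - (V.orthogonalProjectionOnto (τ i : EuclideanSpace ℝ (Fin (m + n))) :
              EuclideanSpace ℝ (Fin (m + n)))⟫_ℝ
      = 1 + ∑ j, ‖(V.orthogonalProjectionOnto
          (EuclideanSpace.basisFun (Fin (m + n)) ℝ j
            - (T.orthogonalProjectionOnto (EuclideanSpace.basisFun (Fin (m + n)) ℝ j) :
                EuclideanSpace ℝ (Fin (m + n)))) : EuclideanSpace ℝ (Fin (m + n)))‖ ^ 2 :=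
  stmt_2_general hm T V hV τ
end

section
/- Let v₁, …, v_N be distinct unit vectors in ℝ^{n+1} with N ≥ 2, and let S := ⋃ᵢ {t·vᵢ : t ≥ 0} be the cone consisting of the corresponding rays. Then there exist a constant C = C(S) and a map F : ℝ^{n+1} → S such that: (i) F is positively 1-homogeneous (F(λx) = λF(x) for λ > 0); (ii) F is Lipschitz; (iii) F(x) = x for all x ∈ S; (iv) |F(x) − x| ≤ C·dist(x, S) for all x ∈ ℝ^{n+1}. -/
open scoped RealInnerProductSpace
open Filter Topology Set

/-!
Put `F x = ∑ᵢ φᵢ(x) vᵢ`, where `φᵢ(x) = max(⟪x, vᵢ⟫ - a‖x‖, 0) / (1 - a)` is a Lipschitz,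
positively 1-homogeneous bump supported on the cone of directions within a small angle of `vᵢ`.
If `8(1 - a)` is below the squared separation of the `vᵢ`, these supports are pairwise disjoint,
so `F x` is a single nonnegative multiple of one `vᵢ`, and `F (t vᵢ) = t vᵢ`. Any `K`-Lipschitz
retraction onto `S` then moves `x` by at most `(K + 1) dist(x, S)`.
-/

lemma exists_pos_forall_ne_le_dist {ι X : Type*} [Finite ι] [MetricSpace X] {v : ι → X}
    (hv : Function.Injective v) : ∃ δ > 0, ∀ i j, i ≠ j → δ ≤ dist (v i) (v j) := by
  have : ∀ᶠ δ in 𝓝[>] (0 : ℝ), ∀ i j, i ≠ j → δ ≤ dist (v i) (v j) := by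
    simp only [eventually_all]
    exact fun i j hij => nhdsWithin_le_nhds <|
      eventually_le_nhds (dist_pos.2 (hv.ne hij))
  exact (this.and self_mem_nhdsWithin).exists.imp fun δ h => ⟨h.2, h.1⟩

lemma LipschitzWith.norm_sub_le_mul_infDist {E : Type*} [SeminormedAddCommGroup E] {K : NNReal}
    {F : E → E} {S : Set E} (hF : LipschitzWith K F) (hS : S.Nonempty)
    (hFS : ∀ y ∈ S, F y = y) (x : E) : ‖F x - x‖ ≤ (K + 1) * Metric.infDist x S := by
  have hK : 0 < (K : ℝ) + 1 := by positivity
  rw [← div_le_iff₀' hK]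
  refine (Metric.le_infDist hS).2 fun y hy => ?_
  rw [div_le_iff₀' hK]
  calc ‖F x - x‖ = ‖(F x - F y) + (y - x)‖ := by rw [hFS y hy, sub_add_sub_cancel]
    _ ≤ ‖F x - F y‖ + ‖y - x‖ := norm_add_le _ _
    _ ≤ K * ‖x - y‖ + ‖x - y‖ := by
        rw [norm_sub_rev y x]
        gcongr
        exact hF.norm_sub_le x y
    _ = (K + 1) * dist x y := by rw [dist_eq_norm]; ring

section InnerProductSpace

variable {E : Type*} [NormedAddCommGroup E] [InnerProductSpace ℝ E]

lemma norm_sub_sq_lt_of_lt_inner {a : ℝ} {w₁ w₂ x : E} (hw₁ : ‖w₁‖ = 1) (hw₂ : ‖w₂‖ = 1)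
    (h₁ : a * ‖x‖ < ⟪x, w₁⟫) (h₂ : a * ‖x‖ < ⟪x, w₂⟫) : ‖w₁ - w₂‖ ^ 2 < 8 * (1 - a) := by
  have hx : 0 < ‖x‖ := by
    refine (norm_nonneg x).lt_of_ne' fun h => ?_
    simp [norm_eq_zero.1 h] at h₁
  have hcap : ∀ w : E, ‖w‖ = 1 → a * ‖x‖ < ⟪x, w⟫ →
      ‖‖x‖ • w - x‖ ^ 2 < 2 * (1 - a) * ‖x‖ ^ 2 := by
    intro w hw h
    rw [norm_sub_sq_real, norm_smul, norm_norm, hw, real_inner_smul_left, real_inner_comm]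
    nlinarith
  have htri : ‖x‖ * ‖w₁ - w₂‖ ≤ ‖‖x‖ • w₁ - x‖ + ‖‖x‖ • w₂ - x‖ := by
    rw [← norm_norm x, ← norm_smul, norm_norm, smul_sub]
    exact (norm_sub_le _ _).trans_eq' (by abel_nf)
  have hsq : (‖x‖ * ‖w₁ - w₂‖) ^ 2 < ‖x‖ ^ 2 * (8 * (1 - a)) := by
    have := hcap w₁ hw₁ h₁
    have := hcap w₂ hw₂ h₂
    calc (‖x‖ * ‖w₁ - w₂‖) ^ 2 ≤ (‖‖x‖ • w₁ - x‖ + ‖‖x‖ • w₂ - x‖) ^ 2 :=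
          pow_le_pow_left₀ (by positivity) htri 2
      _ ≤ 2 * ‖‖x‖ • w₁ - x‖ ^ 2 + 2 * ‖‖x‖ • w₂ - x‖ ^ 2 := by
          nlinarith [sq_nonneg (‖‖x‖ • w₁ - x‖ - ‖‖x‖ • w₂ - x‖)]
      _ < ‖x‖ ^ 2 * (8 * (1 - a)) := by linarith
  rw [mul_pow] at hsq
  exact lt_of_mul_lt_mul_left hsq (by positivity)

noncomputable def coneBump (a : ℝ) (w x : E) : ℝ := max (⟪x, w⟫ - a * ‖x‖) 0 / (1 - a)

variable {a : ℝ} {w x : E}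

lemma coneBump_nonneg (ha : a < 1) : 0 ≤ coneBump a w x :=
  div_nonneg (le_max_right _ _) (by linarith)

lemma coneBump_eq_zero (h : ⟪x, w⟫ ≤ a * ‖x‖) : coneBump a w x = 0 := by
  simp [coneBump, max_eq_right (sub_nonpos.2 h)]

lemma lt_inner_of_coneBump_pos (h : 0 < coneBump a w x) : a * ‖x‖ < ⟪x, w⟫ := by
  by_contra! h'
  simp [coneBump_eq_zero h'] at h

lemma coneBump_smul {l : ℝ} (hl : 0 ≤ l) : coneBump a w (l • x) = l * coneBump a w x := by
  simp only [coneBump, real_inner_smul_left, norm_smul, Real.norm_of_nonneg hl, mul_div_assoc',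
    mul_max_of_nonneg _ _ hl, mul_zero, mul_sub, mul_left_comm a l]

lemma coneBump_smul_self (hw : ‖w‖ = 1) (ha : a < 1) {t : ℝ} (ht : 0 ≤ t) :
    coneBump a w (t • w) = t := by
  have h1a : 1 - a ≠ 0 := by linarith
  rw [coneBump_smul ht, coneBump, real_inner_self_eq_norm_sq, hw, one_pow, mul_one,
    max_eq_left (by linarith), div_self h1a, mul_one]

lemma abs_coneBump_sub_le (hw : ‖w‖ = 1) (ha : a < 1) (y : E) :
    |coneBump a w x - coneBump a w y| ≤ (1 + |a|) / (1 - a) * ‖x - y‖ := by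
  have h1a : 0 < 1 - a := by linarith
  rw [coneBump, coneBump, ← sub_div, abs_div, abs_of_pos h1a, div_mul_eq_mul_div]
  gcongr
  calc |max (⟪x, w⟫ - a * ‖x‖) 0 - max (⟪y, w⟫ - a * ‖y‖) 0|
      ≤ |(⟪x, w⟫ - a * ‖x‖) - (⟪y, w⟫ - a * ‖y‖)| := abs_max_sub_max_le_abs _ _ _
    _ = |⟪x - y, w⟫ - a * (‖x‖ - ‖y‖)| := by rw [inner_sub_left]; ring_nf
    _ ≤ |⟪x - y, w⟫| + |a| * |‖x‖ - ‖y‖| := (abs_sub _ _).trans_eq (by rw [abs_mul])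
    _ ≤ ‖x - y‖ * ‖w‖ + |a| * ‖x - y‖ := by
        gcongr
        · exact abs_real_inner_le_norm _ _
        · exact abs_norm_sub_norm_le _ _
    _ = (1 + |a|) * ‖x - y‖ := by rw [hw]; ring

def rayCone {ι : Type*} (v : ι → E) : Set E := ⋃ i, (fun t : ℝ => t • v i) '' Ici 0

variable {ι : Type*} {v : ι → E}

lemma coneBump_eq_zero_of_ne (hv : ∀ i, ‖v i‖ = 1)
    (hsep : ∀ i j, i ≠ j → 8 * (1 - a) ≤ ‖v i - v j‖ ^ 2) {i j : ι} (hij : i ≠ j)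
    (hi : 0 < coneBump a (v i) x) : coneBump a (v j) x = 0 :=
  coneBump_eq_zero <| not_lt.1 fun hj => (hsep i j hij).not_gt <|
    norm_sub_sq_lt_of_lt_inner (hv i) (hv j) (lt_inner_of_coneBump_pos hi) hj

variable [Fintype ι]

noncomputable def coneRetraction (v : ι → E) (a : ℝ) (x : E) : E := ∑ i, coneBump a (v i) x • v i

lemma coneRetraction_smul {l : ℝ} (hl : 0 ≤ l) :
    coneRetraction v a (l • x) = l • coneRetraction v a x := by
  simp only [coneRetraction, coneBump_smul hl, Finset.smul_sum, mul_smul]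

lemma lipschitzWith_coneRetraction (hv : ∀ i, ‖v i‖ = 1) (ha : a < 1) :
    LipschitzWith (Real.toNNReal (Fintype.card ι * ((1 + |a|) / (1 - a))))
      (coneRetraction v a) := by
  refine LipschitzWith.of_dist_le' fun x y => ?_
  simp only [dist_eq_norm, coneRetraction, ← Finset.sum_sub_distrib, ← sub_smul]
  calc ‖∑ i, (coneBump a (v i) x - coneBump a (v i) y) • v i‖
      ≤ ∑ i, ‖(coneBump a (v i) x - coneBump a (v i) y) • v i‖ := norm_sum_le _ _
    _ ≤ ∑ _i : ι, (1 + |a|) / (1 - a) * ‖x - y‖ := by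
        gcongr with i
        rw [norm_smul, hv, mul_one, Real.norm_eq_abs]
        exact abs_coneBump_sub_le (hv i) ha y
    _ = Fintype.card ι * ((1 + |a|) / (1 - a)) * ‖x - y‖ := by
        rw [Finset.sum_const, Finset.card_univ, nsmul_eq_mul, mul_assoc]

lemma coneRetraction_eq_smul_of_forall_ne {i : ι} (h : ∀ j ≠ i, coneBump a (v j) x = 0) :
    coneRetraction v a x = coneBump a (v i) x • v i :=
  Finset.sum_eq_single i (fun j _ hj => by rw [h j hj, zero_smul]) (by simp)

section Separated

variable (hv : ∀ i, ‖v i‖ = 1) (hsep : ∀ i j, i ≠ j → 8 * (1 - a) ≤ ‖v i - v j‖ ^ 2)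
include hv hsep

lemma exists_coneRetraction_eq_smul [Nonempty ι] (ha : a < 1) :
    ∃ i, coneRetraction v a x = coneBump a (v i) x • v i := by
  by_cases h : ∃ i, 0 < coneBump a (v i) x
  · obtain ⟨i, hi⟩ := h
    exact ⟨i, coneRetraction_eq_smul_of_forall_ne fun j hj =>
      coneBump_eq_zero_of_ne hv hsep (Ne.symm hj) hi⟩
  · simp only [not_exists, not_lt] at h
    obtain ⟨i⟩ := ‹Nonempty ι›
    exact ⟨i, coneRetraction_eq_smul_of_forall_ne fun j _ => (h j).antisymm (coneBump_nonneg ha)⟩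

lemma coneRetraction_mem_rayCone [Nonempty ι] (ha : a < 1) : coneRetraction v a x ∈ rayCone v :=
  have ⟨i, hi⟩ := exists_coneRetraction_eq_smul hv hsep ha (x := x)
  mem_iUnion.2 ⟨i, _, coneBump_nonneg ha, hi.symm⟩

lemma coneRetraction_eq_self (ha : a < 1) (hx : x ∈ rayCone v) : coneRetraction v a x = x := by
  obtain ⟨i, t, ht, rfl⟩ := mem_iUnion.1 hx
  rcases (mem_Ici.1 ht).eq_or_lt with rfl | ht
  · dsimp only
    rw [coneRetraction_smul le_rfl, zero_smul, zero_smul]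
  have hti : coneBump a (v i) (t • v i) = t := coneBump_smul_self (hv i) ha ht.le
  rw [coneRetraction_eq_smul_of_forall_ne fun j hj =>
    coneBump_eq_zero_of_ne hv hsep (Ne.symm hj) (hti ▸ ht), hti]

end Separated

end InnerProductSpace

/-- Lipschitz homogeneous retraction onto a one-dimensional cone: given distinct unit
vectors `v i` (`N ≥ 2`) in `ℝ^{n+1}` and the cone `S = ⋃ᵢ ℝ₊·vᵢ`, there are a constant
`C = C(S)` and a map `F : ℝ^{n+1} → S` which is positively 1-homogeneous, Lipschitz,
restricts to the identity on `S`, and satisfies `‖F x - x‖ ≤ C dist(x, S)`. -/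
theorem stmt_13 {n Nv : ℕ} (hNv : 2 ≤ Nv)
    (v : Fin Nv → EuclideanSpace ℝ (Fin (n + 1)))
    (hunit : ∀ i, ‖v i‖ = 1) (hinj : Function.Injective v) :
    ∃ (C : ℝ) (K : NNReal)
      (F : EuclideanSpace ℝ (Fin (n + 1)) → EuclideanSpace ℝ (Fin (n + 1))),
      (∀ x, F x ∈ ⋃ i, (fun t : ℝ => t • v i) '' Set.Ici 0) ∧
      (∀ l : ℝ, 0 < l → ∀ x, F (l • x) = l • F x) ∧
      LipschitzWith K F ∧
      (∀ x ∈ ⋃ i, (fun t : ℝ => t • v i) '' Set.Ici 0, F x = x) ∧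
      (∀ x, ‖F x - x‖ ≤ C * Metric.infDist x (⋃ i, (fun t : ℝ => t • v i) '' Set.Ici 0)) := by
  have : Nonempty (Fin Nv) := ⟨⟨0, by omega⟩⟩
  obtain ⟨a, ha, hsep⟩ : ∃ a < 1, ∀ i j, i ≠ j → 8 * (1 - a) ≤ ‖v i - v j‖ ^ 2 := by
    obtain ⟨δ, hδ, hδv⟩ := exists_pos_forall_ne_le_dist hinj
    refine ⟨1 - δ ^ 2 / 8, by linarith [pow_pos hδ 2], fun i j hij => ?_⟩
    calc 8 * (1 - (1 - δ ^ 2 / 8)) = δ ^ 2 := by ring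
      _ ≤ ‖v i - v j‖ ^ 2 := by
        rw [← dist_eq_norm]
        exact pow_le_pow_left₀ hδ.le (hδv i j hij) 2
  have hlip := lipschitzWith_coneRetraction hunit ha
  have hfix : ∀ x ∈ rayCone v, coneRetraction v a x = x :=
    fun x => coneRetraction_eq_self hunit hsep ha
  refine ⟨_, _, coneRetraction v a, fun x => coneRetraction_mem_rayCone hunit hsep ha,
    fun l hl x => coneRetraction_smul hl.le, hlip, hfix,
    hlip.norm_sub_le_mul_infDist ⟨_, coneRetraction_mem_rayCone hunit hsep ha (x := 0)⟩ hfix⟩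
end
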